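/- Let S be a unitary 2×2 matrix and suppose for positive definite G and H we have G = S† H S and also G = H (i.e., r-coefficients match as in the deterministic-step analysis). If two equations g = r_1 U h S_1 = r_2 V h S_2 hold with U, V unitary, r_1, r_2 > 0, h invertible, and S_1, S_2 unitary, then r_1 = r_2 and [h†h, S_1 S_2†] = 0. -/

import Mathlib

open Matrix

/-! Both factorisations compute the same `gᴴg = rᵢ² • Sᵢᴴ (hᴴh) Sᵢ`. Conjugation by a unitary
preserves the trace, so `tr(hᴴh) = 1` forces `r₁² = r₂²`; cancelling the scalar leaves
`S₁ᴴ (hᴴh) S₁ = S₂ᴴ (hᴴh) S₂`, which says that `hᴴh` commutes with the unitary `S₁S₂ᴴ`. -/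

theorem commute_mul_star_of_star_mul_mul_eq {R : Type*} [Monoid R] [StarMul R] {S T x : R}
    (hS : S ∈ unitary R) (hT : T ∈ unitary R) (h : star S * x * S = star T * x * T) :
    Commute x (S * star T) := by
  refine ((commute_unitary_iff_star_right_conjugate
    (Submonoid.mul_mem _ hS (Unitary.star_mem hT))).2 ?_).symm
  calc S * star T * x * star (S * star T) = S * (star T * x * T) * star S := by
        simp only [star_mul, star_star, mul_assoc]
    _ = S * star S * x * (S * star S) := by rw [← h]; simp only [mul_assoc]
    _ = x := by rw [Unitary.mul_star_self_of_mem hS, one_mul, mul_one]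

namespace Matrix

variable {n m α : Type*} [Fintype n] [DecidableEq n]

theorem trace_conjTranspose_mul_mul_of_mem_unitaryGroup [CommRing α] [StarRing α]
    {S : Matrix n n α} (hS : S ∈ unitaryGroup n α) (A : Matrix n n α) :
    (Sᴴ * A * S).trace = A.trace := by
  have hSS : S * Sᴴ = 1 := hS.2
  rw [trace_mul_cycle, hSS, Matrix.one_mul]

theorem conjTranspose_mul_self_of_mem_unitaryGroup_mul [Fintype m] [CommRing α] [StarRing α]
    {W : Matrix n n α} (hW : W ∈ unitaryGroup n α) (A : Matrix n m α) :
    (W * A)ᴴ * (W * A) = Aᴴ * A := by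
  have hWW : Wᴴ * W = 1 := hW.1
  rw [conjTranspose_mul, Matrix.mul_assoc, ← Matrix.mul_assoc Wᴴ, hWW, Matrix.one_mul]

theorem conjTranspose_mul_self_ofReal_smul_mul_mul {W : Matrix n n ℂ}
    (hW : W ∈ unitaryGroup n ℂ) (r : ℝ) (h S : Matrix n n ℂ) :
    ((r : ℂ) • (W * h * S))ᴴ * ((r : ℂ) • (W * h * S))
      = ((r ^ 2 : ℝ) : ℂ) • (Sᴴ * (hᴴ * h) * S) := by
  rw [conjTranspose_smul, Matrix.smul_mul, Matrix.mul_smul, smul_smul, Matrix.mul_assoc W,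
    conjTranspose_mul_self_of_mem_unitaryGroup_mul hW, conjTranspose_mul, Complex.star_def,
    Complex.conj_ofReal]
  push_cast
  simp only [sq, Matrix.mul_assoc]

end Matrix

theorem stmt5_general {d : ℕ} (g h U V S₁ S₂ : Matrix (Fin d) (Fin d) ℂ)
    (hU : U ∈ Matrix.unitaryGroup (Fin d) ℂ) (hV : V ∈ Matrix.unitaryGroup (Fin d) ℂ)
    (hS₁ : S₁ ∈ Matrix.unitaryGroup (Fin d) ℂ) (hS₂ : S₂ ∈ Matrix.unitaryGroup (Fin d) ℂ)
    (htr : (hᴴ * h).trace = 1)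
    (r₁ r₂ : ℝ) (hr₁ : 0 < r₁) (hr₂ : 0 < r₂)
    (hg₁ : g = (r₁ : ℂ) • (U * h * S₁)) (hg₂ : g = (r₂ : ℂ) • (V * h * S₂)) :
    r₁ = r₂ ∧ Commute (hᴴ * h) (S₁ * S₂ᴴ) := by
  have hgram : ((r₁ ^ 2 : ℝ) : ℂ) • (S₁ᴴ * (hᴴ * h) * S₁)
      = ((r₂ ^ 2 : ℝ) : ℂ) • (S₂ᴴ * (hᴴ * h) * S₂) := by
    rw [← conjTranspose_mul_self_ofReal_smul_mul_mul hU, ← hg₁,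
      ← conjTranspose_mul_self_ofReal_smul_mul_mul hV, ← hg₂]
  have hsq : r₁ ^ 2 = r₂ ^ 2 := by
    have := congrArg trace hgram
    rwa [trace_smul, trace_smul, trace_conjTranspose_mul_mul_of_mem_unitaryGroup hS₁,
      trace_conjTranspose_mul_mul_of_mem_unitaryGroup hS₂, htr, smul_eq_mul, smul_eq_mul,
      mul_one, mul_one, Complex.ofReal_inj] at this
  have hr : r₁ = r₂ := (sq_eq_sq₀ hr₁.le hr₂.le).1 hsq
  refine ⟨hr, commute_mul_star_of_star_mul_mul_eq hS₁ hS₂ ?_⟩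
  rw [hsq] at hgram
  exact smul_right_injective _ (Complex.ofReal_ne_zero.2 (by positivity)) hgram

/-- if `g = r₁ U h S₁ = r₂ V h S₂` with `U, V` unitary, `S₁, S₂`
unitary, `h` invertible and trace-normalized (`tr(hᴴh) = 1`), and `r₁, r₂ > 0`,
then `r₁ = r₂` and `[hᴴh, S₁S₂ᴴ] = 0`. -/
theorem stmt5 {d : ℕ} (g h U V S₁ S₂ : Matrix (Fin d) (Fin d) ℂ)
    (hU : U ∈ Matrix.unitaryGroup (Fin d) ℂ) (hV : V ∈ Matrix.unitaryGroup (Fin d) ℂ)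
    (hS₁ : S₁ ∈ Matrix.unitaryGroup (Fin d) ℂ) (hS₂ : S₂ ∈ Matrix.unitaryGroup (Fin d) ℂ)
    (hh : IsUnit h) (htr : (hᴴ * h).trace = 1)
    (r₁ r₂ : ℝ) (hr₁ : 0 < r₁) (hr₂ : 0 < r₂)
    (hg₁ : g = (r₁ : ℂ) • (U * h * S₁)) (hg₂ : g = (r₂ : ℂ) • (V * h * S₂)) :
    r₁ = r₂ ∧ Commute (hᴴ * h) (S₁ * S₂ᴴ) :=
  stmt5_general g h U V S₁ S₂ hU hV hS₁ hS₂ htr r₁ r₂ hr₁ hr₂ hg₁ hg₂
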